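/- Let L be an n×n symmetric matrix over 𝔽₂ with all diagonal entries equal to 1. Then the all-ones vector 𝟙 lies in the column space (range) of L, equivalently 𝟙 is orthogonal (with respect to the standard bilinear form over 𝔽₂) to every vector in the kernel of L. -/

import Mathlib

/-!
In characteristic 2 the off-diagonal terms of the quadratic form of a symmetric matrix
cancel in pairs, so `a ⬝ᵥ L *ᵥ a = ∑ i, L i i * a i ^ 2`, which over `𝔽₂` with unit
diagonal is `∑ i, a i`. Hence every kernel vector of `L` has even weight. Over a field the
range of `L` is the orthogonal of the left kernel, which for symmetric `L` is the kernel,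
so `𝟙` lies in the range.
-/

open Matrix

theorem Finset.sum_offDiag_eq_zero_of_symm_of_charTwo {ι R : Type*} [DecidableEq ι]
    [Semiring R] [CharP R 2] (s : Finset ι) {f : ι → ι → R}
    (hf : ∀ i j, f i j = f j i) : ∑ p ∈ s.offDiag, f p.1 p.2 = 0 :=
  Finset.sum_involution (fun p _ => p.swap)
    (fun p _ => by rw [Prod.fst_swap, Prod.snd_swap, hf p.2, CharTwo.add_self_eq_zero])
    (fun p hp _ => by simpa [Prod.ext_iff, eq_comm] using (Finset.mem_offDiag.mp hp).2.2)
    (fun p hp => by simp_all [eq_comm]) (fun p _ => p.swap_swap)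

theorem Fintype.sum_sum_eq_sum_self_of_symm_of_charTwo {ι R : Type*} [Fintype ι]
    [Semiring R] [CharP R 2] {f : ι → ι → R} (hf : ∀ i j, f i j = f j i) :
    ∑ i, ∑ j, f i j = ∑ i, f i i := by
  classical
  rw [← Finset.sum_product' (f := f), ← Finset.diag_union_offDiag,
    Finset.sum_union (Finset.disjoint_diag_offDiag _), Finset.sum_diag,
    Finset.sum_offDiag_eq_zero_of_symm_of_charTwo _ hf, add_zero]

theorem Matrix.IsSymm.dotProduct_mulVec_self_of_charTwo {n R : Type*} [Fintype n]
    [CommSemiring R] [CharP R 2] {A : Matrix n n R} (hA : A.IsSymm) (a : n → R) :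
    a ⬝ᵥ A *ᵥ a = ∑ i, A i i * a i ^ 2 := by
  simp only [dotProduct, mulVec, Finset.mul_sum]
  rw [Fintype.sum_sum_eq_sum_self_of_symm_of_charTwo fun i j => by rw [hA.apply i j]; ring]
  exact Finset.sum_congr rfl fun i _ => by ring

theorem Matrix.mem_range_mulVec_iff_forall_vecMul_eq_zero {m n K : Type*}
    [Fintype m] [Fintype n] [DecidableEq m] [Field K]
    (A : Matrix m n K) (v : m → K) :
    v ∈ Set.range A.mulVec ↔ ∀ b, b ᵥ* A = 0 → b ⬝ᵥ v = 0 := by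
  constructor
  · rintro ⟨x, rfl⟩ b hb
    rw [dotProduct_mulVec, hb, zero_dotProduct]
  · intro h
    by_contra hv
    obtain ⟨f, hfv, hf⟩ := Submodule.exists_dual_map_eq_bot_of_notMem
      (p := LinearMap.range A.mulVecLin) (x := v) hv inferInstance
    set b := (dotProductEquiv K m).symm f
    have hf_apply : ∀ w, f w = b ⬝ᵥ w := fun w => by
      rw [← dotProductEquiv_apply_apply, LinearEquiv.apply_symm_apply]
    have hfA : ∀ x, f (A *ᵥ x) = 0 := fun x => by
      simpa [hf] using Submodule.mem_map_of_mem (f := f) (LinearMap.mem_range_self A.mulVecLin x)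
    refine hfv ((hf_apply v).trans (h b (dotProduct_eq_zero _ fun x => ?_)))
    rw [← dotProduct_mulVec, ← hf_apply, hfA]

theorem all_ones_in_range (n : ℕ) (L : Matrix (Fin n) (Fin n) (ZMod 2))
    (hsym : L.transpose = L) (hdiag : ∀ i, L i i = 1) :
    (∀ a : Fin n → ZMod 2, L.mulVec a = 0 → ∑ i, a i = 0) ∧
      (fun _ => (1 : ZMod 2)) ∈ Set.range L.mulVec := by
  have sum_eq_zero_of_mulVec_eq_zero : ∀ a : Fin n → ZMod 2, L *ᵥ a = 0 → ∑ i, a i = 0 :=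
    fun a ha => by
      simpa [hdiag, ZMod.pow_card, ha] using
        (IsSymm.dotProduct_mulVec_self_of_charTwo hsym a).symm
  refine ⟨sum_eq_zero_of_mulVec_eq_zero,
    (L.mem_range_mulVec_iff_forall_vecMul_eq_zero _).mpr fun b hbL => ?_⟩
  rw [← hsym, vecMul_transpose] at hbL
  exact (dotProduct_one b).trans (sum_eq_zero_of_mulVec_eq_zero b hbL)
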